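/- For every integer N ≥ 0 and every δ ∈ (0, 1) there is a constant C > 0 such that for all z ∈ ℂ with |z| ≥ 1 and dist(z, i[0,∞)) ≥ δ|z|, the function e₁ satisfies |e₁(z) − (1/(2πi)) Σ_{k=0}^{N} (−1)^k k!/(2πiz)^{k+1}| ≤ C·|z|^{−N−2}; that is, e₁(z) admits the Gevrey-1 asymptotic expansion (1/(2πi)) Σ_{k≥0} (−1)^k k!/(2πiz)^{k+1} as z → ∞ away from the cut i[0,∞). -/

import Mathlib

/-!
With `w = i z`, `2πi e₁(z) = ∫₀^∞ e^{-2πt} / (t + w) dt`. Expanding `1 / (t + w)` as a finite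
geometric series in `-t / w` with its exact remainder `(-t)ⁿ / (wⁿ (t + w))` and integrating
termwise against the moments `∫₀^∞ tᵏ e^{-at} dt = k! / a^{k+1}` produces the partial sum of the
expansion. For `t ≥ 0`, `|t + w| = dist(z, i t) ≥ δ|z|`, so the remainder integral is at most
`n! / (a^{n+1} |w|ⁿ δ |z|)`.
-/

noncomputable section

open Complex Filter Topology

/-- `e₁(z) = (1/2πi) ∫₀^∞ e^{-2πt}/(t + iz) dt`. -/
def e1 (z : ℂ) : ℂ :=
  1 / (2 * Real.pi * I) *
    ∫ t in Set.Ioi (0 : ℝ), Complex.exp (-2 * Real.pi * t) / ((t : ℂ) + I * z)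

open MeasureTheory Set
open scoped Nat

section Moments

variable {a : ℝ}

theorem integral_pow_mul_exp_neg_mul_Ioi (ha : 0 < a) (m : ℕ) :
    ∫ t in Ioi (0 : ℝ), t ^ m * Real.exp (-(a * t)) = m ! / a ^ (m + 1) := by
  have h := Real.integral_rpow_mul_exp_neg_mul_Ioi (a := (m : ℝ) + 1) (by positivity) ha
  rw [add_sub_cancel_right, Real.Gamma_nat_eq_factorial] at h
  simp_rw [← Real.rpow_natCast, h, one_div, Real.inv_rpow ha.le]
  norm_cast
  rw [div_eq_inv_mul]

theorem integrableOn_pow_mul_exp_neg_mul_Ioi (ha : 0 < a) (m : ℕ) :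
    IntegrableOn (fun t : ℝ => t ^ m * Real.exp (-(a * t))) (Ioi 0) :=
  .of_integral_ne_zero (by rw [integral_pow_mul_exp_neg_mul_Ioi ha]; positivity)

theorem integrableOn_ofReal_pow_mul_exp_neg_mul_Ioi (ha : 0 < a) (m : ℕ) :
    IntegrableOn (fun t : ℝ => (t : ℂ) ^ m * Complex.exp (-(a * t))) (Ioi 0) := by
  exact_mod_cast (integrableOn_pow_mul_exp_neg_mul_Ioi ha m).ofReal (𝕜 := ℂ)

theorem integral_ofReal_pow_mul_exp_neg_mul_Ioi (ha : 0 < a) (m : ℕ) :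
    ∫ t in Ioi (0 : ℝ), (t : ℂ) ^ m * Complex.exp (-(a * t)) = m ! / (a : ℂ) ^ (m + 1) := by
  have h := congrArg ((↑) : ℝ → ℂ) (integral_pow_mul_exp_neg_mul_Ioi ha m)
  rw [← integral_complex_ofReal] at h
  push_cast at h
  exact h

end Moments

theorem inv_add_sub_sum_neg_pow_div_pow {K : Type*} [Field K] {t w : K} (hw : w ≠ 0)
    (htw : t + w ≠ 0) (n : ℕ) :
    (t + w)⁻¹ - ∑ k ∈ Finset.range n, (-t) ^ k / w ^ (k + 1) = (-t) ^ n / (w ^ n * (t + w)) := by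
  induction n with
  | zero => simp
  | succ n ih =>
    rw [Finset.sum_range_succ, ← sub_sub, ih]
    field_simp
    ring

section StieltjesExp

variable {a r : ℝ} {w : ℂ}

theorem ofReal_add_ne_zero_of_le_norm (hr : 0 < r) {t : ℝ} (htw : r ≤ ‖(t : ℂ) + w‖) :
    (t : ℂ) + w ≠ 0 :=
  norm_pos_iff.mp (hr.trans_le htw)

theorem norm_neg_pow_div_mul_exp_le (hr : 0 < r) (hw0 : w ≠ 0) (n : ℕ) {t : ℝ} (ht : 0 ≤ t)
    (htw : r ≤ ‖(t : ℂ) + w‖) :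
    ‖(-t : ℂ) ^ n / (w ^ n * (t + w)) * Complex.exp (-(a * t))‖ ≤
      t ^ n * Real.exp (-(a * t)) / (‖w‖ ^ n * r) := by
  have hexp : ‖Complex.exp (-(a * t))‖ = Real.exp (-(a * t)) := by
    rw [Complex.norm_exp]; simp
  rw [norm_mul, hexp, norm_div, norm_mul, norm_pow, norm_pow, norm_neg, norm_real,
    Real.norm_of_nonneg ht, div_mul_eq_mul_div]
  have : 0 < ‖w‖ := norm_pos_iff.mpr hw0
  gcongr

theorem integrableOn_neg_pow_div_mul_exp (ha : 0 < a) (hr : 0 < r)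
    (hw : ∀ t : ℝ, 0 ≤ t → r ≤ ‖(t : ℂ) + w‖) (n : ℕ) :
    IntegrableOn (fun t : ℝ => (-t : ℂ) ^ n / (w ^ n * (t + w)) * Complex.exp (-(a * t)))
      (Ioi 0) := by
  have hw0 : w ≠ 0 := by simpa using ofReal_add_ne_zero_of_le_norm hr (hw 0 le_rfl)
  have hcont : ContinuousOn
      (fun t : ℝ => (-t : ℂ) ^ n / (w ^ n * (t + w)) * Complex.exp (-(a * t))) (Ioi 0) := by
    refine ContinuousOn.mul (ContinuousOn.div (by fun_prop) (by fun_prop) fun t ht => ?_)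
      (by fun_prop)
    exact mul_ne_zero (pow_ne_zero _ hw0) (ofReal_add_ne_zero_of_le_norm hr (hw t ht.le))
  refine ((integrableOn_pow_mul_exp_neg_mul_Ioi ha n).div_const (‖w‖ ^ n * r)).mono'
    (hcont.aestronglyMeasurable measurableSet_Ioi) ?_
  filter_upwards [ae_restrict_mem measurableSet_Ioi] with t ht
  exact norm_neg_pow_div_mul_exp_le hr hw0 n ht.le (hw t ht.le)

theorem integral_neg_pow_div_pow_mul_exp (ha : 0 < a) (k : ℕ) :
    ∫ t in Ioi (0 : ℝ), (-t : ℂ) ^ k / w ^ (k + 1) * Complex.exp (-(a * t)) =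
      (-1) ^ k * k ! / (a * w) ^ (k + 1) := by
  have hrw : ∀ t : ℝ, (-t : ℂ) ^ k / w ^ (k + 1) * Complex.exp (-(a * t)) =
      (-1) ^ k / w ^ (k + 1) * ((t : ℂ) ^ k * Complex.exp (-(a * t))) := fun t => by
    rw [neg_pow]; ring
  simp_rw [hrw]
  rw [integral_const_mul, integral_ofReal_pow_mul_exp_neg_mul_Ioi ha, mul_pow]
  ring

theorem norm_integral_exp_div_add_sub_sum_le (ha : 0 < a) (hr : 0 < r)
    (hw : ∀ t : ℝ, 0 ≤ t → r ≤ ‖(t : ℂ) + w‖) (n : ℕ) :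
    ‖(∫ t in Ioi (0 : ℝ), Complex.exp (-(a * t)) / (t + w)) -
        ∑ k ∈ Finset.range n, (-1) ^ k * k ! / (a * w) ^ (k + 1)‖ ≤
      n ! / (a ^ (n + 1) * ‖w‖ ^ n * r) := by
  have hw0 : w ≠ 0 := by simpa using ofReal_add_ne_zero_of_le_norm hr (hw 0 le_rfl)
  set R := fun t : ℝ => (-t : ℂ) ^ n / (w ^ n * (t + w)) * Complex.exp (-(a * t))
  have hterm_int : ∀ k, IntegrableOn
      (fun t : ℝ => (-t : ℂ) ^ k / w ^ (k + 1) * Complex.exp (-(a * t))) (Ioi 0) := fun k => by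
    refine IntegrableOn.congr_fun ((integrableOn_ofReal_pow_mul_exp_neg_mul_Ioi ha k).const_mul
      ((-1) ^ k / w ^ (k + 1))) (fun t _ => ?_) measurableSet_Ioi
    rw [neg_pow]
    ring
  have hsplit : ∀ t ∈ Ioi (0 : ℝ), Complex.exp (-(a * t)) / (t + w) =
      ∑ k ∈ Finset.range n, (-t : ℂ) ^ k / w ^ (k + 1) * Complex.exp (-(a * t)) + R t := by
    intro t ht
    have hgeom := inv_add_sub_sum_neg_pow_div_pow hw0
      (ofReal_add_ne_zero_of_le_norm hr (hw t ht.le)) n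
    dsimp only [R]
    rw [← Finset.sum_mul, ← hgeom, div_eq_mul_inv]
    ring
  have hdiff : (∫ t in Ioi (0 : ℝ), Complex.exp (-(a * t)) / (t + w)) -
      ∑ k ∈ Finset.range n, (-1) ^ k * k ! / (a * w) ^ (k + 1) = ∫ t in Ioi (0 : ℝ), R t := by
    rw [setIntegral_congr_fun measurableSet_Ioi hsplit,
      integral_add (integrable_finsetSum _ fun k _ => hterm_int k)
        (integrableOn_neg_pow_div_mul_exp ha hr hw n),
      integral_finsetSum _ fun k _ => hterm_int k]
    simp_rw [integral_neg_pow_div_pow_mul_exp ha]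
    ring
  rw [hdiff]
  calc ‖∫ t in Ioi (0 : ℝ), R t‖
      ≤ ∫ t in Ioi (0 : ℝ), t ^ n * Real.exp (-(a * t)) / (‖w‖ ^ n * r) := by
        refine norm_integral_le_of_norm_le
          ((integrableOn_pow_mul_exp_neg_mul_Ioi ha n).div_const _) ?_
        filter_upwards [ae_restrict_mem measurableSet_Ioi] with t ht
        exact norm_neg_pow_div_mul_exp_le hr hw0 n ht.le (hw t ht.le)
    _ = n ! / (a ^ (n + 1) * ‖w‖ ^ n * r) := by
        rw [integral_div, integral_pow_mul_exp_neg_mul_Ioi ha, div_div, mul_assoc]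

end StieltjesExp

theorem infDist_le_norm_ofReal_add_I_mul (z : ℂ) {t : ℝ} (ht : 0 ≤ t) :
    Metric.infDist z {w : ℂ | w.re = 0 ∧ 0 ≤ w.im} ≤ ‖(t : ℂ) + I * z‖ := by
  have hmem : I * t ∈ {w : ℂ | w.re = 0 ∧ 0 ≤ w.im} := by simp [ht]
  calc Metric.infDist z _ ≤ dist z (I * t) := Metric.infDist_le_dist_of_mem hmem
    _ = ‖I * (z - I * t)‖ := by rw [dist_eq_norm, norm_mul, norm_I, one_mul]
    _ = ‖(t : ℂ) + I * z‖ := by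
      rw [mul_sub, ← mul_assoc, I_mul_I]
      ring_nf

theorem e1_eq_integral (z : ℂ) :
    e1 z = 1 / (2 * Real.pi * I) *
      ∫ t in Ioi (0 : ℝ), Complex.exp (-((2 * Real.pi : ℝ) * t)) / (t + I * z) := by
  rw [e1]
  push_cast
  ring_nf

theorem stmt13_general (N : ℕ) (δ : ℝ) (hδ0 : 0 < δ) :
    ∃ C : ℝ, 0 < C ∧ ∀ z : ℂ, 1 ≤ ‖z‖ →
      δ * ‖z‖ ≤ Metric.infDist z {w : ℂ | w.re = 0 ∧ 0 ≤ w.im} →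
      ‖e1 z - 1 / (2 * Real.pi * I) *
          ∑ k ∈ Finset.range (N + 1),
            (-1) ^ k * (k.factorial : ℂ) / (2 * Real.pi * I * z) ^ (k + 1)‖
        ≤ C * (‖z‖ ^ (N + 2))⁻¹ := by
  refine ⟨(N + 1)! / ((2 * Real.pi) ^ (N + 3) * δ), by positivity, fun z hz hdist => ?_⟩
  have hz0 : 0 < ‖z‖ := one_pos.trans_le hz
  have hw : ∀ t : ℝ, 0 ≤ t → δ * ‖z‖ ≤ ‖(t : ℂ) + I * z‖ := fun t ht =>
    hdist.trans (infDist_le_norm_ofReal_add_I_mul z ht)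
  have hkey := norm_integral_exp_div_add_sub_sum_le (a := 2 * Real.pi) (by positivity)
    (by positivity) hw (N + 1)
  rw [norm_mul, norm_I, one_mul] at hkey
  have hscale : (2 * Real.pi * I * z : ℂ) = (2 * Real.pi : ℝ) * (I * z) := by push_cast; ring
  have hnorm : ‖1 / (2 * Real.pi * I)‖ = (2 * Real.pi)⁻¹ := by
    simp [abs_of_pos Real.pi_pos]
  rw [e1_eq_integral, hscale, ← mul_sub, norm_mul, hnorm]
  calc (2 * Real.pi)⁻¹ * ‖_‖
      ≤ (2 * Real.pi)⁻¹ *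
          ((N + 1)! / ((2 * Real.pi) ^ (N + 1 + 1) * ‖z‖ ^ (N + 1) * (δ * ‖z‖))) := by
        gcongr
    _ = (N + 1)! / ((2 * Real.pi) ^ (N + 3) * δ) * (‖z‖ ^ (N + 2))⁻¹ := by
        field_simp
        ring

/-- The function `e₁` has the Gevrey-1 asymptotic expansion
`(1/2πi) Σ_k (-1)^k k!/(2πiz)^{k+1}` as `z → ∞` away from the cut `i[0,∞)`: for every
`N` and every `δ ∈ (0,1)` there is `C > 0` such that whenever `|z| ≥ 1` and
`dist(z, i[0,∞)) ≥ δ|z|`, the error after `N + 1` terms is at most `C·|z|^{-N-2}`. -/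
theorem stmt13 (N : ℕ) (δ : ℝ) (hδ0 : 0 < δ) (hδ1 : δ < 1) :
    ∃ C : ℝ, 0 < C ∧ ∀ z : ℂ, 1 ≤ ‖z‖ →
      δ * ‖z‖ ≤ Metric.infDist z {w : ℂ | w.re = 0 ∧ 0 ≤ w.im} →
      ‖e1 z - 1 / (2 * Real.pi * I) *
          ∑ k ∈ Finset.range (N + 1),
            (-1) ^ k * (k.factorial : ℂ) / (2 * Real.pi * I * z) ^ (k + 1)‖
        ≤ C * (‖z‖ ^ (N + 2))⁻¹ :=
  stmt13_general N δ hδ0
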